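/- arXiv:2406.02741 — 3 statements merged into one kernel-verified Lean document; each statement's English description precedes it below -/
import Mathlib

section
/- The map F = P ∘ L_ε^n (n leapfrog steps followed by momentum flip) is a volume-preserving involution on R^{2D}. -/
open MeasureTheory

/-- One leapfrog step with step size ε, gradient of log-density `g`, and inverse mass
matrix `Minv`. -/
noncomputable def leapfrog {D : ℕ} (g : (Fin D → ℝ) → (Fin D → ℝ))
    (Minv : Matrix (Fin D) (Fin D) ℝ) (ε : ℝ)
    (p : (Fin D → ℝ) × (Fin D → ℝ)) : (Fin D → ℝ) × (Fin D → ℝ) :=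
  let ρ' := p.2 + (ε / 2) • g p.1
  let θ' := p.1 + ε • Minv.mulVec ρ'
  (θ', ρ' + (ε / 2) • g θ')

/-- The momentum flip map. -/
def momentumFlip {D : ℕ} (p : (Fin D → ℝ) × (Fin D → ℝ)) : (Fin D → ℝ) × (Fin D → ℝ) :=
  (p.1, -p.2)

lemma key {D : ℕ} (g : (Fin D → ℝ) → (Fin D → ℝ))
    (Minv : Matrix (Fin D) (Fin D) ℝ) (ε : ℝ) (p : (Fin D → ℝ) × (Fin D → ℝ)) :
    leapfrog g Minv ε (momentumFlip (leapfrog g Minv ε p)) = momentumFlip p := by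
  obtain ⟨θ, ρ⟩ := p
  simp only [leapfrog, momentumFlip, Prod.mk.injEq]
  set A := θ + ε • Minv.mulVec (ρ + (ε/2) • g θ) with hA
  have h1 : -(ρ + (ε/2) • g θ + (ε/2) • g A) + (ε/2) • g A = -(ρ + (ε/2) • g θ) := by abel
  rw [h1, Matrix.mulVec_neg]
  have h0 : A + ε • -(Minv.mulVec (ρ + (ε/2) • g θ)) = θ := by rw [hA]; module
  rw [h0]
  exact ⟨rfl, by abel⟩

lemma inv_lemma {D : ℕ} (g : (Fin D → ℝ) → (Fin D → ℝ))
    (Minv : Matrix (Fin D) (Fin D) ℝ) (ε : ℝ) (n : ℕ) (p : (Fin D → ℝ) × (Fin D → ℝ)) :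
    (leapfrog g Minv ε)^[n] (momentumFlip ((leapfrog g Minv ε)^[n] p)) = momentumFlip p := by
  induction n generalizing p with
  | zero => rfl
  | succ n ih =>
    rw [Function.iterate_succ_apply, Function.iterate_succ_apply', key, ih]

lemma mp_flip {D : ℕ} : MeasurePreserving (momentumFlip (D := D)) volume volume := by
  have : momentumFlip (D := D) = Prod.map id (Neg.neg) := rfl
  rw [this, Measure.volume_eq_prod]
  exact (MeasurePreserving.id volume).prod (Measure.measurePreserving_neg volume)

lemma mp_shear_snd {D : ℕ} {f : (Fin D → ℝ) → (Fin D → ℝ)} (hf : Measurable f) :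
    MeasurePreserving (fun p : (Fin D → ℝ) × (Fin D → ℝ) => (p.1, p.2 + f p.1))
      volume volume := by
  rw [Measure.volume_eq_prod]
  exact (MeasurePreserving.id volume).skew_product (g := fun x y => y + f x)
    (measurable_snd.add (hf.comp measurable_fst))
    (Filter.Eventually.of_forall fun x => (measurePreserving_add_right volume (f x)).map_eq)

lemma mp_shear_fst {D : ℕ} {f : (Fin D → ℝ) → (Fin D → ℝ)} (hf : Measurable f) :
    MeasurePreserving (fun p : (Fin D → ℝ) × (Fin D → ℝ) => (p.1 + f p.2, p.2))
      volume volume := by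
  have hswap : MeasurePreserving (Prod.swap : (Fin D → ℝ) × (Fin D → ℝ) → _) volume volume := by
    rw [Measure.volume_eq_prod]; exact Measure.measurePreserving_swap
  have := hswap.comp ((mp_shear_snd hf).comp hswap)
  convert this using 1
  rfl

/-- The map F = P ∘ L_ε^n (n leapfrog steps followed by momentum flip) is a
volume-preserving involution on ℝ^{2D}. -/
theorem flip_leapfrog_volume_preserving_involution {D : ℕ}
    (g : (Fin D → ℝ) → (Fin D → ℝ)) (hg : Differentiable ℝ g)
    (Minv : Matrix (Fin D) (Fin D) ℝ) (ε : ℝ) (hε : 0 < ε) (n : ℕ) :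
    ((momentumFlip ∘ (leapfrog g Minv ε)^[n]) ∘
       (momentumFlip ∘ (leapfrog g Minv ε)^[n]) = id) ∧
    MeasurePreserving (momentumFlip ∘ (leapfrog g Minv ε)^[n]) volume volume := by
  constructor
  · funext p
    simp only [Function.comp_apply, id_eq]
    rw [inv_lemma]
    simp [momentumFlip]
  · have hgm : Measurable g := hg.continuous.measurable
    have hM : Measurable fun v : Fin D → ℝ => ε • Minv.mulVec v := by
      have : Continuous fun v : Fin D → ℝ => Minv.mulVec v :=
        (Matrix.mulVecLin Minv).continuous_of_finiteDimensional
      exact (this.const_smul ε).measurable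
    have hL : MeasurePreserving (leapfrog g Minv ε) volume volume := by
      have h1 := mp_shear_snd (D := D) (f := fun θ => (ε/2) • g θ)
        ((hgm.const_smul (ε/2)))
      have h2 := mp_shear_fst (D := D) (f := fun ρ => ε • Minv.mulVec ρ) hM
      have : leapfrog g Minv ε =
          (fun p : (Fin D → ℝ) × (Fin D → ℝ) => (p.1, p.2 + (ε/2) • g p.1)) ∘
          (fun p => (p.1 + ε • Minv.mulVec p.2, p.2)) ∘
          (fun p => (p.1, p.2 + (ε/2) • g p.1)) := rfl
      rw [this]
      exact h1.comp (h2.comp h1)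
    exact mp_flip.comp (hL.iterate n)
end

section
/- If the acceptance probability α : S × S → [0,1] satisfies detailed balance in the form π(x)·α(x, F(x)) = π(F(x))·α(F(x), x) for all x, where F is a measure-preserving involution on S = R^{2D} and π is a probability density, then the Metropolis update with deterministic proposal y = F(x) (accept F(x) with probability α(x, F(x)), otherwise stay at x) leaves the measure with density π invariant. -/
/-!
Split the step into the move term `α(x, F x) g(F x) π(x)` and the rejection term
`(1 - α(x, F x)) g(x) π(x)`. Substituting `x ↦ F x` in the move term (legitimate since `F` is a
measure-preserving involution) and applying detailed balance turns it into
`α(x, F x) g(x) π(x)`, which recombines with the rejection term to `g(x) π(x)`.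
-/

open MeasureTheory Function

variable {X : Type*} {F : X → X} {π : X → ℝ} {α : X × X → ℝ}

theorem comp_involution_eq_of_detailed_balance (hinv : Involutive F)
    (hbal : ∀ x, π x * α (x, F x) = π (F x) * α (F x, x)) (g : X → ℝ) :
    (fun x => α (x, F x) * g (F x) * π x) ∘ F = fun x => α (x, F x) * g x * π x := by
  funext x
  simp only [comp_apply, hinv x]
  linear_combination g x * (hbal x).symm

variable [MeasurableSpace X] {μ : Measure X}

theorem Function.Involutive.measurableEmbedding (hinv : Involutive F) (hF : Measurable F) :
    MeasurableEmbedding F :=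
  (MeasurableEquiv.ofInvolutive F hinv hF).measurableEmbedding

theorem integral_metropolis_involution_step (hF : MeasurePreserving F μ μ) (hinv : Involutive F)
    (hαm : Measurable α) (hα : ∀ p, α p ∈ Set.Icc (0 : ℝ) 1)
    (hbal : ∀ x, π x * α (x, F x) = π (F x) * α (F x, x))
    {g : X → ℝ} (hg : Integrable (fun x => g x * π x) μ) :
    ∫ x, (α (x, F x) * g (F x) + (1 - α (x, F x)) * g x) * π x ∂μ = ∫ x, g x * π x ∂μ := by
  have hemb := hinv.measurableEmbedding hF.measurable
  have hflux := comp_involution_eq_of_detailed_balance hinv hbal g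
  have hαF : Measurable fun x => α (x, F x) := hαm.comp (measurable_id.prodMk hF.measurable)
  have hstay : Integrable (fun x => α (x, F x) * g x * π x) μ := by
    simpa only [mul_assoc] using hg.bdd_mul (c := 1) hαF.aestronglyMeasurable
      (.of_forall fun x => abs_le.2 ⟨by linarith [(hα (x, F x)).1], (hα (x, F x)).2⟩)
  have hmove : Integrable (fun x => α (x, F x) * g (F x) * π x) μ :=
    (hF.integrable_comp_emb hemb).1 (hflux ▸ hstay)
  have hreject : Integrable (fun x => (1 - α (x, F x)) * g x * π x) μ := by
    refine (hg.sub hstay).congr (.of_forall fun x => ?_)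
    simp only [Pi.sub_apply]
    ring
  have hmove_eq : ∫ x, α (x, F x) * g (F x) * π x ∂μ = ∫ x, α (x, F x) * g x * π x ∂μ := by
    rw [← hflux, ← hF.integral_comp hemb]
    rfl
  calc ∫ x, (α (x, F x) * g (F x) + (1 - α (x, F x)) * g x) * π x ∂μ
      = ∫ x, α (x, F x) * g (F x) * π x ∂μ + ∫ x, (1 - α (x, F x)) * g x * π x ∂μ := by
        rw [← integral_add hmove hreject]
        simp only [add_mul]
    _ = ∫ x, α (x, F x) * g x * π x ∂μ + ∫ x, (1 - α (x, F x)) * g x * π x ∂μ := by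
        rw [hmove_eq]
    _ = ∫ x, g x * π x ∂μ := by
        rw [← integral_add hstay hreject]
        congr 1 with x
        ring

theorem metropolis_deterministic_invariant_general {D : ℕ}
    (F : (Fin D → ℝ) × (Fin D → ℝ) → (Fin D → ℝ) × (Fin D → ℝ))
    (hF : MeasurePreserving F volume volume) (hFF : F ∘ F = id)
    (π : (Fin D → ℝ) × (Fin D → ℝ) → ℝ)
    (hπ1 : ∫ x, π x = 1)
    (α : ((Fin D → ℝ) × (Fin D → ℝ)) × ((Fin D → ℝ) × (Fin D → ℝ)) → ℝ)
    (hαm : Measurable α) (hα : ∀ p, α p ∈ Set.Icc (0 : ℝ) 1)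
    (hbal : ∀ x, π x * α (x, F x) = π (F x) * α (F x, x)) :
    ∀ A : Set ((Fin D → ℝ) × (Fin D → ℝ)), MeasurableSet A →
      ∫ x, (α (x, F x) * A.indicator (fun _ => (1 : ℝ)) (F x)
            + (1 - α (x, F x)) * A.indicator (fun _ => (1 : ℝ)) x) * π x
        = ∫ x in A, π x := by
  intro A hA
  have hπ : Integrable π := .of_integral_ne_zero (by simp [hπ1])
  have hindicator : (fun x => A.indicator (fun _ => (1 : ℝ)) x * π x) = A.indicator π := by
    funext x
    by_cases hx : x ∈ A <;> simp [hx]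
  have hg : Integrable (fun x => A.indicator (fun _ => (1 : ℝ)) x * π x) := by
    rw [hindicator]
    exact hπ.indicator hA
  rw [integral_metropolis_involution_step hF (congrFun hFF) hαm hα hbal hg, hindicator,
    integral_indicator hA]

/-- If the acceptance probability α satisfies detailed balance
π(x)·α(x, F(x)) = π(F(x))·α(F(x), x) for a measure-preserving involution F and a
probability density π, then the Metropolis update with deterministic proposal
y = F(x) leaves the measure with density π invariant. -/
theorem metropolis_deterministic_invariant {D : ℕ}
    (F : (Fin D → ℝ) × (Fin D → ℝ) → (Fin D → ℝ) × (Fin D → ℝ))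
    (hF : MeasurePreserving F volume volume) (hFF : F ∘ F = id)
    (π : (Fin D → ℝ) × (Fin D → ℝ) → ℝ) (hπm : Measurable π)
    (hπ0 : ∀ x, 0 ≤ π x) (hπ1 : ∫ x, π x = 1)
    (α : ((Fin D → ℝ) × (Fin D → ℝ)) × ((Fin D → ℝ) × (Fin D → ℝ)) → ℝ)
    (hαm : Measurable α) (hα : ∀ p, α p ∈ Set.Icc (0 : ℝ) 1)
    (hbal : ∀ x, π x * α (x, F x) = π (F x) * α (F x, x)) :
    ∀ A : Set ((Fin D → ℝ) × (Fin D → ℝ)), MeasurableSet A →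
      ∫ x, (α (x, F x) * A.indicator (fun _ => (1 : ℝ)) (F x)
            + (1 - α (x, F x)) * A.indicator (fun _ => (1 : ℝ)) x) * π x
        = ∫ x in A, π x :=
  metropolis_deterministic_invariant_general F hF hFF π hπ1 α hαm hα hbal
end

section
/- Let F₁, F₂ be involutions on S and π a strictly positive density. Define α₁(x) = min(1, π(F₁(x))/π(x)) and, on the set where α₁(x) < 1 and α₁(F₂(x)) < 1, define α₂(x) = min(1, (π(F₂(x))/π(x)) · (1 − α₁(F₂(x)))/(1 − α₁(x))). Then α₂ satisfies the second-stage balance condition π(x)·(1 − α₁(x))·α₂(x) = π(F₂(x))·(1 − α₁(F₂(x)))·α₂(F₂(x)) for all such x. -/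
/-! With `m y = π y * (1 - α₁ y)` the probability mass rejected at the first stage, `α₂` is the
Metropolis ratio `min 1 (m (F₂ x) / m x)`; since `F₂` is an involution both sides of the balance
equation equal `min (m x) (m (F₂ x))`. -/

theorem mul_min_one_div_eq_min {K : Type*} [Field K] [LinearOrder K] [IsStrictOrderedRing K]
    {a : K} (b : K) (ha : 0 < a) : a * min 1 (b / a) = min a b := by
  rw [mul_min_of_nonneg _ _ ha.le, mul_one, mul_div_cancel₀ _ ha.ne']

theorem mul_min_one_div_comm {K : Type*} [Field K] [LinearOrder K] [IsStrictOrderedRing K]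
    {a b : K} (ha : 0 < a) (hb : 0 < b) : a * min 1 (b / a) = b * min 1 (a / b) := by
  rw [mul_min_one_div_eq_min b ha, mul_min_one_div_eq_min a hb, min_comm]

theorem delayed_rejection_second_stage_balance_general {S : Type*}
    (F₂ : S → S) (hF₂ : F₂ ∘ F₂ = id)
    (π : S → ℝ) (hπ : ∀ x, 0 < π x)
    (α₁ : S → ℝ)
    (α₂ : S → ℝ)
    (hα₂ : ∀ x, α₂ x = min 1 ((π (F₂ x) / π x) * ((1 - α₁ (F₂ x)) / (1 - α₁ x))))
    (x : S) (hx₁ : α₁ x < 1) (hx₂ : α₁ (F₂ x) < 1) :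
    π x * (1 - α₁ x) * α₂ x = π (F₂ x) * (1 - α₁ (F₂ x)) * α₂ (F₂ x) := by
  have rejected_mass_pos : ∀ y, α₁ y < 1 → 0 < π y * (1 - α₁ y) :=
    fun y hy => mul_pos (hπ y) (sub_pos.2 hy)
  have hα₂_ratio : ∀ y, α₂ y = min 1 (π (F₂ y) * (1 - α₁ (F₂ y)) / (π y * (1 - α₁ y))) :=
    fun y => by rw [hα₂, mul_div_mul_comm]
  have hF₂x : F₂ (F₂ x) = x := congrFun hF₂ x
  rw [hα₂_ratio x, hα₂_ratio (F₂ x), hF₂x]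
  exact mul_min_one_div_comm (rejected_mass_pos x hx₁) (rejected_mass_pos _ hx₂)

/-- Second-stage delayed rejection balance condition for DR-G-HMC. -/
theorem delayed_rejection_second_stage_balance {S : Type*}
    (F₁ F₂ : S → S) (hF₁ : F₁ ∘ F₁ = id) (hF₂ : F₂ ∘ F₂ = id)
    (π : S → ℝ) (hπ : ∀ x, 0 < π x)
    (α₁ : S → ℝ) (hα₁ : ∀ x, α₁ x = min 1 (π (F₁ x) / π x))
    (α₂ : S → ℝ)
    (hα₂ : ∀ x, α₂ x = min 1 ((π (F₂ x) / π x) * ((1 - α₁ (F₂ x)) / (1 - α₁ x))))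
    (x : S) (hx₁ : α₁ x < 1) (hx₂ : α₁ (F₂ x) < 1) :
    π x * (1 - α₁ x) * α₂ x = π (F₂ x) * (1 - α₁ (F₂ x)) * α₂ (F₂ x) :=
  delayed_rejection_second_stage_balance_general F₂ hF₂ π hπ α₁ α₂ hα₂ x hx₁ hx₂
end
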